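/- arXiv:1804.06168 — 4 statements merged into one kernel-verified Lean document; each statement's English description precedes it below -/
import Mathlib

section
/- Pumping lemma for energy parity games: let ρ = v₀v₁v₂⋯ be an infinite play consistent with a finite-state winning strategy σ of size s for Player 0 in an energy parity game with n vertices and largest absolute edge weight W, starting from a vertex from which σ is winning. Then every finite infix π of ρ satisfies w(π) > -(ns - 1)W - 1. -/
/-! Suppose the infix from `j` to `j'` has weight at most `-(ns - 1)W - 1`. Since one step changes
the running weight by at most `W`, there are positions `j = x₀ < x₁ < ⋯ < x_{ns}` at which the
running weight strictly decreases, each time by at most `W` (take for `x_{i+1}` the first later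
position of smaller running weight). Two of them carry the same pair (vertex, memory state), so the
infix between them is a negative cycle in the product of the arena with the memory. The play that
follows `ρ` up to that cycle and then repeats it forever is still consistent with `σ` and starts in
`v₀`, yet its energy falls below any initial credit: `σ` would not be winning. -/

open scoped BigOperators

variable {V M : Type*}

/-- An infinite play through the arena with edge relation `E`. -/
def IsPlay (E : V → V → Prop) (ρ : ℕ → V) : Prop := ∀ j, E (ρ j) (ρ (j + 1))

/-- The sequence of memory states of the memory structure `(M, init, upd)`
along the play `ρ`. -/
def memSeq (init : V → M) (upd : M → V → M) (ρ : ℕ → V) : ℕ → M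
  | 0 => init (ρ 0)
  | j + 1 => upd (memSeq init upd ρ j) (ρ (j + 1))

/-- Consistency of the play `ρ` with the finite-state strategy for Player 0
implemented by the memory structure `(M, init, upd)` and next-move function
`nxt`. -/
def ConsistentFS (V0 : Set V) (init : V → M) (upd : M → V → M)
    (nxt : V → M → V) (ρ : ℕ → V) : Prop :=
  ∀ j, ρ j ∈ V0 → ρ (j + 1) = nxt (ρ j) (memSeq init upd ρ j)

/-- The (max-) parity condition: the maximal color occurring infinitely often
is even. -/
def SatParity (Ω : V → ℕ) (ρ : ℕ → V) : Prop :=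
  ∃ c, Even c ∧ {j | Ω (ρ j) = c}.Infinite ∧ ∀ c' > c, {j | Ω (ρ j) = c'}.Finite

/-- The energy condition with initial credit `c₀`: the energy level of every
prefix is nonnegative. -/
def EnergyOK (w : V → V → ℤ) (c₀ : ℕ) (ρ : ℕ → V) : Prop :=
  ∀ j, 0 ≤ (c₀ : ℤ) + ∑ k ∈ Finset.range j, w (ρ k) (ρ (k + 1))

open Finset

section Drop

variable {f : ℕ → ℤ} {W : ℕ}

theorem exists_bounded_drop (hf : ∀ k, f k - W ≤ f (k + 1)) {j j' : ℕ} (hj : j ≤ j')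
    (hdrop : f j' < f j) : ∃ k, j < k ∧ k ≤ j' ∧ f j - W ≤ f k ∧ f k < f j := by
  induction j', hj using Nat.le_induction with
  | base => exact absurd hdrop (lt_irrefl _)
  | succ i _ ih =>
    by_cases hi : f i < f j
    · obtain ⟨k, hjk, hki, hk⟩ := ih hi
      exact ⟨k, hjk, hki.trans i.le_succ, hk⟩
    · exact ⟨i + 1, by omega, le_rfl, by linarith [hf i], hdrop⟩

theorem exists_strictAntiOn_card_of_drop (hf : ∀ k, f k - W ≤ f (k + 1)) (m : ℕ) {j j' : ℕ}
    (hj : j ≤ j') (hdrop : f j' + m * W < f j) :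
    ∃ S : Finset ℕ, IsLeast (S : Set ℕ) j ∧ StrictAntiOn f S ∧ #S = m + 2 := by
  induction m generalizing j with
  | zero =>
    have hjj' : j < j' := hj.lt_of_ne (by rintro rfl; simp at hdrop)
    refine ⟨{j, j'}, ?_, ?_, card_pair hjj'.ne⟩
    · simp [IsLeast, lowerBounds, hj]
    · rw [coe_pair, strictAntiOn_insert_iff_of_forall_ge (by simp [hj])]
      simp_all
  | succ m ih =>
    obtain ⟨k, hjk, hkj', hfk, hfkj⟩ :=
      exists_bounded_drop hf hj (by push_cast at hdrop; nlinarith)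
    obtain ⟨S, hleast, hanti, hcard⟩ := ih hkj' (by push_cast at hdrop; linarith)
    have hjS : ∀ s ∈ (S : Set ℕ), j ≤ s := fun s hs => hjk.le.trans (hleast.2 hs)
    refine ⟨insert j S, ?_, ?_, ?_⟩
    · rw [coe_insert]
      exact ⟨Set.mem_insert j _, Set.forall_mem_insert.2 ⟨le_rfl, hjS⟩⟩
    · rw [coe_insert, strictAntiOn_insert_iff_of_forall_ge hjS]
      exact ⟨fun s hs _ => (hanti.antitoneOn hleast.1 hs (hleast.2 hs)).trans_lt hfkj, hanti⟩
    · rw [card_insert_of_notMem fun h => (hleast.2 h).not_gt hjk, hcard]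

end Drop

/-- `ρ ∘ lassoIdx p L` follows `ρ` up to position `p` and then runs through
`ρ p, …, ρ (p + L - 1)` forever. -/
def lassoIdx (p L k : ℕ) : ℕ := if k < p then k else p + (k - p) % L

theorem lassoIdx_of_lt {p L k : ℕ} (h : k < p) : lassoIdx p L k = k := if_pos h

theorem lassoIdx_add (p L r : ℕ) : lassoIdx p L (p + r) = p + r % L := by
  simp [lassoIdx]

theorem lassoIdx_zero (p L : ℕ) : lassoIdx p L 0 = 0 := by
  rcases p.eq_zero_or_pos with rfl | hp
  · simpa using lassoIdx_add 0 L 0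
  · exact lassoIdx_of_lt hp

theorem apply_lassoIdx_succ {α : Type*} (σ : ℕ → α) {p L : ℕ} (hL : 0 < L)
    (hσ : σ (p + L) = σ p) (k : ℕ) : σ (lassoIdx p L (k + 1)) = σ (lassoIdx p L k + 1) := by
  rcases lt_or_ge k p with hk | hk
  · rw [lassoIdx_of_lt hk]
    rcases (Nat.succ_le_of_lt hk).lt_or_eq with hk' | rfl
    · rw [lassoIdx_of_lt hk']
    · simpa using congrArg σ (lassoIdx_add (k + 1) L 0)
  · obtain ⟨r, rfl⟩ := Nat.exists_eq_add_of_le hk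
    rw [add_assoc, lassoIdx_add, lassoIdx_add, ← Nat.mod_add_mod]
    have hr : r % L + 1 ≤ L := Nat.mod_lt r hL
    rcases hr.lt_or_eq with hr | hwrap
    · rw [Nat.mod_eq_of_lt hr, add_assoc]
    · rw [hwrap, Nat.mod_self, add_zero, add_assoc, hwrap, hσ]

theorem sum_range_lassoIdx {β : Type*} [AddCommMonoid β] (b : ℕ → β) (p L T : ℕ) :
    ∑ k ∈ range (p + T * L), b (lassoIdx p L k) =
      ∑ k ∈ range p, b k + T • ∑ k ∈ Ico p (p + L), b k := by
  induction T with
  | zero => simpa using sum_congr rfl fun k hk => congrArg b (lassoIdx_of_lt (mem_range.1 hk))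
  | succ T ih =>
    have hperiod : ∀ r ∈ range L, b (lassoIdx p L (p + T * L + r)) = b (p + r) := fun r hr => by
      rw [add_assoc, lassoIdx_add, Nat.mul_add_mod', Nat.mod_eq_of_lt (mem_range.1 hr)]
    rw [add_mul, one_mul, ← add_assoc, sum_range_add, ih, sum_congr rfl hperiod,
      sum_Ico_eq_sum_range, add_tsub_cancel_left, succ_nsmul, add_assoc]

def prefixWeight (w : V → V → ℤ) (ρ : ℕ → V) (j : ℕ) : ℤ :=
  ∑ k ∈ range j, w (ρ k) (ρ (k + 1))

theorem sum_Ico_eq_prefixWeight_sub (w : V → V → ℤ) (ρ : ℕ → V) {j j' : ℕ} (hj : j ≤ j') :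
    ∑ k ∈ Ico j j', w (ρ k) (ρ (k + 1)) = prefixWeight w ρ j' - prefixWeight w ρ j :=
  sum_Ico_eq_sub _ hj

section Reindex

variable {ρ : ℕ → V} {g : ℕ → ℕ}

theorem IsPlay.comp {E : V → V → Prop} (hρ : IsPlay E ρ)
    (hg : ∀ k, ρ (g (k + 1)) = ρ (g k + 1)) : IsPlay E (ρ ∘ g) := fun k => by
  simpa only [Function.comp_apply, hg] using hρ (g k)

theorem memSeq_comp (init : V → M) (upd : M → V → M) (hg0 : g 0 = 0)
    (hg : ∀ k, ρ (g (k + 1)) = ρ (g k + 1))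
    (hgm : ∀ k, memSeq init upd ρ (g (k + 1)) = memSeq init upd ρ (g k + 1)) (k : ℕ) :
    memSeq init upd (ρ ∘ g) k = memSeq init upd ρ (g k) := by
  induction k with
  | zero => simp [memSeq, hg0]
  | succ k ih => rw [hgm, memSeq, ih, Function.comp_apply, hg, memSeq]

theorem ConsistentFS.comp {V0 : Set V} {init : V → M} {upd : M → V → M} {nxt : V → M → V}
    (hρ : ConsistentFS V0 init upd nxt ρ) (hg0 : g 0 = 0)
    (hg : ∀ k, ρ (g (k + 1)) = ρ (g k + 1))
    (hgm : ∀ k, memSeq init upd ρ (g (k + 1)) = memSeq init upd ρ (g k + 1)) :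
    ConsistentFS V0 init upd nxt (ρ ∘ g) := fun k hk => by
  rw [Function.comp_apply, hg, memSeq_comp init upd hg0 hg hgm]
  exact hρ (g k) hk

theorem prefixWeight_comp (w : V → V → ℤ) (hg : ∀ k, ρ (g (k + 1)) = ρ (g k + 1)) (n : ℕ) :
    prefixWeight w (ρ ∘ g) n = ∑ k ∈ range n, w (ρ (g k)) (ρ (g k + 1)) := by
  simp only [prefixWeight, Function.comp_apply, hg]

end Reindex

theorem prefixWeight_le_of_state_eq {V0 : Set V} {E : V → V → Prop} {w : V → V → ℤ}
    {init : V → M} {upd : M → V → M} {nxt : V → M → V} {c₀ : ℕ} {ρ : ℕ → V}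
    (hwin : ∀ π, IsPlay E π → π 0 = ρ 0 → ConsistentFS V0 init upd nxt π → EnergyOK w c₀ π)
    (hplay : IsPlay E ρ) (hcons : ConsistentFS V0 init upd nxt ρ) {p q : ℕ} (hpq : p < q)
    (hv : ρ q = ρ p) (hm : memSeq init upd ρ q = memSeq init upd ρ p) :
    prefixWeight w ρ p ≤ prefixWeight w ρ q := by
  obtain ⟨L, hL, rfl⟩ : ∃ L, 0 < L ∧ q = p + L := ⟨q - p, by omega, by omega⟩
  have hg0 := lassoIdx_zero p L
  have hg := apply_lassoIdx_succ ρ hL hv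
  have hgm := apply_lassoIdx_succ (memSeq init upd ρ) hL hm
  have hlasso : EnergyOK w c₀ (ρ ∘ lassoIdx p L) :=
    hwin _ (hplay.comp hg) (by simp [hg0]) (hcons.comp hg0 hg hgm)
  have hweight (T : ℕ) : prefixWeight w (ρ ∘ lassoIdx p L) (p + T * L) =
      prefixWeight w ρ p + T * (prefixWeight w ρ (p + L) - prefixWeight w ρ p) := by
    rw [prefixWeight_comp w hg, sum_range_lassoIdx (fun i => w (ρ i) (ρ (i + 1))),
      sum_Ico_eq_prefixWeight_sub w ρ (Nat.le_add_right p L), nsmul_eq_mul]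
    rfl
  by_contra! hneg
  obtain ⟨T, hT⟩ := exists_nat_gt ((c₀ : ℤ) + prefixWeight w ρ p)
  have henergy : 0 ≤ (c₀ : ℤ) + prefixWeight w (ρ ∘ lassoIdx p L) (p + T * L) := hlasso _
  rw [hweight] at henergy
  nlinarith

theorem IsPlay.prefixWeight_sub_le {E : V → V → Prop} {w : V → V → ℤ} {W : ℕ}
    (hW : ∀ u v, E u v → (w u v).natAbs ≤ W) {ρ : ℕ → V} (hρ : IsPlay E ρ) (k : ℕ) :
    prefixWeight w ρ k - W ≤ prefixWeight w ρ (k + 1) := by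
  have := hW _ _ (hρ k)
  rw [prefixWeight, prefixWeight, sum_range_succ]
  omega

/-- pumping lemma for energy parity games. If `σ` is a
finite-state winning strategy (of size `s = card M`) for Player 0 from `v0`
(with some initial credit `c₀`) in an energy parity game with `n = card V`
vertices and largest absolute weight `W`, then every infix of every play that
starts in `v0` and is consistent with `σ` has weight `> -(ns - 1)W - 1`. -/
theorem energy_parity_pumping [Fintype V] [Fintype M]
    (V0 : Set V) (E : V → V → Prop) (Ω : V → ℕ) (w : V → V → ℤ) (W : ℕ)
    (init : V → M) (upd : M → V → M) (nxt : V → M → V) (v0 : V) (c₀ : ℕ)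
    (hW : ∀ u v, E u v → (w u v).natAbs ≤ W)
    (hwin : ∀ ρ, IsPlay E ρ → ρ 0 = v0 → ConsistentFS V0 init upd nxt ρ →
      SatParity Ω ρ ∧ EnergyOK w c₀ ρ)
    (ρ : ℕ → V) (hplay : IsPlay E ρ) (h0 : ρ 0 = v0)
    (hcons : ConsistentFS V0 init upd nxt ρ) (j j' : ℕ) (hj : j ≤ j') :
    -(((Fintype.card V * Fintype.card M : ℕ) : ℤ) - 1) * (W : ℤ) - 1 <
      ∑ k ∈ Finset.Ico j j', w (ρ k) (ρ (k + 1)) := by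
  obtain ⟨m, hm⟩ : ∃ m, Fintype.card V * Fintype.card M = m + 1 :=
    Nat.exists_eq_succ_of_ne_zero (Nat.mul_pos (Fintype.card_pos_iff.2 ⟨v0⟩)
      (Fintype.card_pos_iff.2 ⟨init v0⟩)).ne'
  rw [hm, sum_Ico_eq_prefixWeight_sub w ρ hj]
  by_contra! hdrop
  obtain ⟨S, -, hanti, hcard⟩ := exists_strictAntiOn_card_of_drop
    (hplay.prefixWeight_sub_le hW) m hj (by push_cast at hdrop; linarith)
  obtain ⟨p, hp, q, hq, hpq, hstate⟩ := exists_ne_map_eq_of_card_lt_of_maps_to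
    (s := S) (t := univ) (f := fun k => (ρ k, memSeq init upd ρ k))
    (by simp [hm, hcard]) fun _ _ => mem_univ _
  simp only [Prod.mk.injEq] at hstate
  have henergy : ∀ π, IsPlay E π → π 0 = ρ 0 → ConsistentFS V0 init upd nxt π →
      EnergyOK w c₀ π := fun π hπ hπ0 hπcons => (hwin π hπ (hπ0.trans h0) hπcons).2
  rcases hpq.lt_or_gt with hlt | hlt
  · exact (hanti hp hq hlt).not_ge
      (prefixWeight_le_of_state_eq henergy hplay hcons hlt hstate.1.symm hstate.2.symm)
  · exact (hanti hq hp hlt).not_ge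
      (prefixWeight_le_of_state_eq henergy hplay hcons hlt hstate.1 hstate.2)
end

section
/- If a winning condition Win is i-extendable and the game (A, Win) is determined, then the winning region of Player 1-i is a trap for Player i. -/
variable {V : Type*}

/-- Prepending a finite word `u` of vertices to an infinite play `ρ`. -/
def prepend (u : List V) (ρ : ℕ → V) : ℕ → V := fun n =>
  if h : n < u.length then u.get ⟨n, h⟩ else ρ (n - u.length)

/-- A strategy (a map from play prefixes, given as nonempty histories ending in
the current vertex, to next vertices) is legal if it always moves along edges. -/
def IsStrategy (E : V → V → Prop) (σ : List V → V) : Prop :=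
  ∀ (l : List V) (v : V), E v (σ (l.concat v))

/-- Consistency of the play `ρ` with the strategy `σ` of the player whose
vertices are `P`. -/
def ConsistentWith (P : Set V) (σ : List V → V) (ρ : ℕ → V) : Prop :=
  ∀ j, ρ j ∈ P → ρ (j + 1) = σ ((List.range (j + 1)).map ρ)

/-- The winning region of the player whose vertices are `P` and whose set of
winning plays is `S`: the vertices from which this player has a winning
strategy. -/
def WinRegion (E : V → V → Prop) (P : Set V) (S : Set (ℕ → V)) : Set V :=
  {v | ∃ σ, IsStrategy E σ ∧
    ∀ ρ, IsPlay E ρ → ρ 0 = v → ConsistentWith P σ ρ → ρ ∈ S}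

/-- `Y` is a trap for the player whose vertices are `Vi`. -/
def IsTrap (Vi : Set V) (E : V → V → Prop) (Y : Set V) : Prop :=
  ∀ v ∈ Y, (v ∈ Vi → ∀ v', E v v' → v' ∈ Y) ∧
    (v ∉ Vi → ∃ v', E v v' ∧ v' ∈ Y)

/-!
Let `σ` win for Player `1-i` from `v`, and let `v'` be a successor of `v` that is either
arbitrary (if `v` belongs to Player `i`) or the move `σ [v]` (if `v` belongs to Player `1-i`).
From `v'`, Player `1-i` plays `σ` as if the history started with `v`: every play `ρ` from `v'`
consistent with this shifted strategy yields the play `v ρ` from `v`, consistent with `σ`,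
hence won by Player `1-i`. Since `Win` is closed under prepending words, its complement is
closed under deleting them, so `ρ` is won by Player `1-i` as well.
-/

def WinsFrom (E : V → V → Prop) (P : Set V) (S : Set (ℕ → V)) (σ : List V → V) (v : V) :
    Prop :=
  ∀ ρ, IsPlay E ρ → ρ 0 = v → ConsistentWith P σ ρ → ρ ∈ S

@[simp]
lemma prepend_singleton_zero (v : V) (ρ : ℕ → V) : prepend [v] ρ 0 = v := rfl

@[simp]
lemma prepend_singleton_succ (v : V) (ρ : ℕ → V) (n : ℕ) : prepend [v] ρ (n + 1) = ρ n := by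
  simp [prepend]

lemma map_range_succ_prepend_singleton (v : V) (ρ : ℕ → V) (n : ℕ) :
    (List.range (n + 1)).map (prepend [v] ρ) = v :: (List.range n).map ρ := by
  simp [List.range_succ_eq_map, List.map_map, Function.comp_def]

lemma IsPlay.prepend_singleton {E : V → V → Prop} {ρ : ℕ → V} {v : V} (hρ : IsPlay E ρ)
    (hv : E v (ρ 0)) : IsPlay E (prepend [v] ρ)
  | 0 => hv
  | n + 1 => by simpa using hρ n

lemma IsStrategy.cons {E : V → V → Prop} {σ : List V → V} (hσ : IsStrategy E σ) (v : V) :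
    IsStrategy E (fun l => σ (v :: l)) :=
  fun l w => by simpa using hσ (v :: l) w

lemma ConsistentWith.prepend_singleton {P : Set V} {σ : List V → V} {ρ : ℕ → V} {v : V}
    (hρ : ConsistentWith P (fun l => σ (v :: l)) ρ) (hv : v ∈ P → ρ 0 = σ [v]) :
    ConsistentWith P σ (prepend [v] ρ)
  | 0, h => by simpa [map_range_succ_prepend_singleton] using hv h
  | n + 1, h => by simpa [map_range_succ_prepend_singleton] using hρ n h

lemma WinsFrom.cons {E : V → V → Prop} {P : Set V} {S : Set (ℕ → V)} {σ : List V → V}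
    {v v' : V} (hS : ∀ ρ, prepend [v] ρ ∈ S → ρ ∈ S) (hσ : WinsFrom E P S σ v)
    (hE : E v v') (hmove : v ∈ P → v' = σ [v]) :
    WinsFrom E P S (fun l => σ (v :: l)) v' := by
  rintro ρ hρ rfl hcons
  exact hS ρ <| hσ _ (hρ.prepend_singleton hE) rfl (hcons.prepend_singleton hmove)

lemma mem_winRegion_of_edge {E : V → V → Prop} {P : Set V} {S : Set (ℕ → V)}
    {σ : List V → V} {v v' : V} (hS : ∀ ρ, prepend [v] ρ ∈ S → ρ ∈ S)
    (hσ : IsStrategy E σ) (hwin : WinsFrom E P S σ v) (hE : E v v')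
    (hmove : v ∈ P → v' = σ [v]) : v' ∈ WinRegion E P S :=
  ⟨_, hσ.cons v, hwin.cons hS hE hmove⟩

theorem winRegion_opponent_isTrap_general (E : V → V → Prop) (Vi : Set V)
    (Win : Set (ℕ → V))
    (hext : ∀ ρ ∈ Win, ∀ u : List V, prepend u ρ ∈ Win) :
    IsTrap Vi E (WinRegion E Viᶜ Winᶜ) := by
  rintro v ⟨σ, hσ, hwin⟩
  have hS : ∀ ρ, prepend [v] ρ ∈ Winᶜ → ρ ∈ Winᶜ := fun ρ h hρ => h (hext ρ hρ [v])
  have hσv : E v (σ [v]) := by simpa using hσ [] v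
  refine ⟨fun hv v' hE => ?_, fun _ => ⟨σ [v], hσv, ?_⟩⟩
  · exact mem_winRegion_of_edge hS hσ hwin hE fun hv' => absurd hv hv'
  · exact mem_winRegion_of_edge hS hσ hwin hσv fun _ => rfl

/-- if the winning condition of Player `i` (whose vertices are
`Vi` and whose set of winning plays is `Win`) is `i`-extendable and the game is
determined, then the winning region of Player `1-i` (the opponent, whose
vertices are `Viᶜ` and winning plays `Winᶜ`) is a trap for Player `i`. -/
theorem winRegion_opponent_isTrap (E : V → V → Prop) (Vi : Set V)
    (Win : Set (ℕ → V))
    (hTotal : ∀ v, ∃ v', E v v')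
    (hext : ∀ ρ ∈ Win, ∀ u : List V, prepend u ρ ∈ Win)
    (hdet : ∀ v, v ∈ WinRegion E Vi Win ∨ v ∈ WinRegion E Viᶜ Winᶜ) :
    IsTrap Vi E (WinRegion E Viᶜ Winᶜ) :=
  winRegion_opponent_isTrap_general E Vi Win hext
end

section
/- In the cycle game G_{n,W}, every play visits the color-1 vertex infinitely often, and every request for color 1 is answered with cost exactly (n-1)W; hence limsup_j Cor(ρ, j) = (n-1)W for the unique play ρ from each starting vertex. -/
open scoped BigOperators

variable {V : Type*}

/-- The set of colors answering a request for color `c`. -/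
def Ans (c : ℕ) : Set ℕ := {c' | c ≤ c' ∧ Even c'}

/-- The weight of the infix `v_j ⋯ v_i` of the play `ρ`. -/
def infixWeight (w : V → V → ℤ) (ρ : ℕ → V) (j i : ℕ) : ℤ :=
  ∑ k ∈ Finset.Ico j i, w (ρ k) (ρ (k + 1))

/-- The amplitude of the infix `v_j ⋯ v_{j'}` of the play `ρ`: the maximum over
all its prefixes of the absolute value of the accumulated weight. -/
def infixAmpl (w : V → V → ℤ) (ρ : ℕ → V) (j j' : ℕ) : ℕ :=
  (Finset.Icc j j').sup fun i => (infixWeight w ρ j i).natAbs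

/-- The cost-of-response at position `j` of the play `ρ`. -/
noncomputable def Cor (Ω : V → ℕ) (w : V → V → ℤ) (ρ : ℕ → V) (j : ℕ) : ℕ∞ :=
  sInf {x : ℕ∞ | ∃ j', j ≤ j' ∧ Ω (ρ j') ∈ Ans (Ω (ρ j)) ∧
    x = (infixAmpl w ρ j j' : ℕ∞)}

lemma infixWeight_const (W : ℕ) (ρ : ℕ → V) (j i : ℕ) :
    infixWeight (fun _ _ => (W : ℤ)) ρ j i = ((i - j) * W : ℕ) := by
  simp [infixWeight, Finset.sum_const, Nat.card_Ico, mul_comm]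

lemma infixAmpl_const (W : ℕ) (ρ : ℕ → V) (j j' : ℕ) (h : j ≤ j') :
    infixAmpl (fun _ _ => (W : ℤ)) ρ j j' = (j' - j) * W := by
  unfold infixAmpl
  apply le_antisymm
  · apply Finset.sup_le
    intro k hk
    rw [infixWeight_const, Int.natAbs_natCast]
    exact Nat.mul_le_mul_right _ (by simp at hk; omega)
  · simp only [infixWeight_const, Int.natAbs_natCast]
    exact Finset.le_sup (f := fun k => (k - j) * W) (Finset.mem_Icc.mpr ⟨h, le_refl j'⟩)

/-- in the cycle game `G_{n,W}` (a single directed cycle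
`v₁ → ⋯ → v_n → v₁` with all edge weights `W > 0`, where `v₁` has color 1,
`v_n` has color 2, and all other vertices have color 0), the unique play from
any starting vertex visits the color-1 vertex infinitely often, every request
for color 1 is answered with cost exactly `(n-1)W`, and the limsup of the
costs-of-response equals `(n-1)W`. -/
theorem cycle_game_cost (n W : ℕ) (hn : 2 ≤ n) (hW : 0 < W) (i : Fin n) :
    let Ω : Fin n → ℕ := fun v => if v.val = 0 then 1 else if v.val = n - 1 then 2 else 0
    let w : Fin n → Fin n → ℤ := fun _ _ => (W : ℤ)
    let ρ : ℕ → Fin n := fun j => ⟨(i.val + j) % n, Nat.mod_lt _ (by omega)⟩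
    {j | Ω (ρ j) = 1}.Infinite ∧
      (∀ j, Ω (ρ j) = 1 → Cor Ω w ρ j = (((n - 1) * W : ℕ) : ℕ∞)) ∧
      Filter.atTop.limsup (fun j => Cor Ω w ρ j) = (((n - 1) * W : ℕ) : ℕ∞) := by
  intro Ω w ρ
  have hn0 : 0 < n := by omega
  have hΩ : ∀ j, Ω (ρ j) =
      if (i.val + j) % n = 0 then 1 else if (i.val + j) % n = n - 1 then 2 else 0 := by
    intro j; rfl
  -- membership of periodic positions in the color-1 set
  have hmem : ∀ k, Ω (ρ (n - i.val + k * n)) = 1 := by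
    intro k
    rw [hΩ]
    have h1 : i.val + (n - i.val + k * n) = n + k * n := by
      have := i.isLt; omega
    rw [h1]
    simp [Nat.add_mul_mod_self_right, Nat.mod_self]
  -- every request for color 1 is answered with cost (n-1)W
  have part2 : ∀ j, Ω (ρ j) = 1 → Cor Ω w ρ j = (((n - 1) * W : ℕ) : ℕ∞) := by
    intro j hj1
    have hj : (i.val + j) % n = 0 := by
      rw [hΩ] at hj1
      by_contra h
      rw [if_neg h] at hj1
      split at hj1 <;> omega
    apply le_antisymm
    · -- the answer at j + (n-1) witnesses the cost (n-1)W
      apply sInf_le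
      refine ⟨j + (n - 1), by omega, ?_, ?_⟩
      · have h2 : (i.val + (j + (n - 1))) % n = n - 1 := by
          have h3 : i.val + (j + (n - 1)) = (i.val + j) + (n - 1) := by omega
          rw [h3, Nat.add_mod, hj, Nat.zero_add, Nat.mod_mod_of_dvd _ dvd_rfl,
            Nat.mod_eq_of_lt (by omega)]
        rw [hΩ j, if_pos hj, hΩ (j + (n - 1)), if_neg (by omega), if_pos h2]
        exact ⟨by norm_num, even_two⟩
      · rw [show w = (fun _ _ => (W : ℤ)) from rfl,
          infixAmpl_const W ρ j (j + (n - 1)) (by omega)]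
        have h5 : j + (n - 1) - j = n - 1 := by omega
        rw [h5]
    · -- every answer has cost at least (n-1)W
      apply le_sInf
      rintro x ⟨j', hjj', hans, rfl⟩
      rw [hΩ j, if_pos hj] at hans
      obtain ⟨hle, heven⟩ := hans
      have hj'2 : (i.val + j') % n = n - 1 := by
        rw [hΩ] at hle heven
        by_contra h
        rcases Nat.eq_zero_or_pos ((i.val + j') % n) with h0 | h0
        · rw [if_pos h0] at heven; exact (Nat.not_even_one) heven
        · rw [if_neg (by omega), if_neg h] at hle; omega
      have hd : (j' - j) % n = n - 1 := by
        have h4 : i.val + j' = (i.val + j) + (j' - j) := by omega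
        rw [h4, Nat.add_mod, hj, Nat.zero_add, Nat.mod_mod_of_dvd _ dvd_rfl] at hj'2
        exact hj'2
      have hdge : n - 1 ≤ j' - j := hd ▸ Nat.mod_le _ _
      rw [show w = (fun _ _ => (W : ℤ)) from rfl, infixAmpl_const W ρ j j' hjj']
      exact_mod_cast Nat.cast_le.mpr (Nat.mul_le_mul_right W hdge)
  -- Cor is bounded by (n-1)W everywhere
  have cor_le : ∀ j, Cor Ω w ρ j ≤ (((n - 1) * W : ℕ) : ℕ∞) := by
    intro j
    by_cases h1 : Ω (ρ j) = 1
    · exact (part2 j h1).le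
    · refine le_trans (sInf_le ⟨j, le_rfl, ?_, ?_⟩) zero_le
      · refine ⟨le_rfl, ?_⟩
        rw [hΩ] at h1 ⊢
        split_ifs at h1 ⊢ <;> first | omega | decide
      · rw [show w = (fun _ _ => (W : ℤ)) from rfl, infixAmpl_const W ρ j j le_rfl]
        simp
  refine ⟨?_, part2, ?_⟩
  · -- infinitely many color-1 positions
    apply Set.infinite_of_injective_forall_mem (f := fun k : ℕ => n - i.val + k * n)
    · intro a b hab
      simp only at hab
      have : a * n = b * n := by omega
      exact Nat.eq_of_mul_eq_mul_right hn0 this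
    · intro k
      exact hmem k
  · -- limsup
    apply le_antisymm
    · exact Filter.limsup_le_of_le (by isBoundedDefault) (Filter.Eventually.of_forall cor_le)
    · refine Filter.le_limsup_of_frequently_le ?_ (by isBoundedDefault)
      rw [Filter.frequently_atTop]
      intro N
      refine ⟨n - i.val + N * n, ?_, (part2 _ (hmem N)).ge⟩
      have : N ≤ N * n := Nat.le_mul_of_pos_right N hn0
      omega
end

section
/- If a play ρ in a parity game with weights visits a designated restart vertex ⊤ infinitely often, and between any two consecutive visits to ⊤ there is a request answered or unanswered with cost exceeding the k-th counter value, where the counter values strictly increase, then limsup_{j→∞} Cor(ρ, j) = ∞, i.e., ρ violates the parity condition with weights. -/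
open scoped BigOperators

variable {V : Type*}

open Filter

theorem ENat.limsup_eq_top_of_frequently_natCast_le {α : Type*} {l : Filter α} {f : α → ℕ∞}
    (h : ∀ n : ℕ, ∃ᶠ x in l, (n : ℕ∞) ≤ f x) : limsup f l = ⊤ := by
  refine top_unique ?_
  rw [← ENat.iSup_natCast]
  exact iSup_le fun n => le_limsup_of_frequently_le (h n)

theorem ENat.limsup_eq_top_of_natCast_lt_comp {f : ℕ → ℕ∞} {pos b : ℕ → ℕ}
    (hpos : Tendsto pos atTop atTop) (hb : StrictMono b) (hf : ∀ k, (b k : ℕ∞) < f (pos k)) :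
    limsup f atTop = ⊤ := by
  refine ENat.limsup_eq_top_of_frequently_natCast_le fun n => hpos.frequently ?_
  refine (eventually_ge_atTop n).frequently.mono fun k hk => (hf k).le.trans' ?_
  exact_mod_cast hk.trans hb.le_apply

theorem restarts_force_unbounded_cost_general (Ω : V → ℕ) (w : V → V → ℤ) (ρ : ℕ → V)
    (t : ℕ → ℕ) (ht : StrictMono t)
    (b : ℕ → ℕ) (hb : StrictMono b) (pos : ℕ → ℕ)
    (hpos : ∀ k, t k < pos k ∧ pos k < t (k + 1))
    (hcost : ∀ k, (b k : ℕ∞) < Cor Ω w ρ (pos k)) :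
    Filter.atTop.limsup (fun j => Cor Ω w ρ j) = ⊤ := by
  have hpos_tendsto : Tendsto pos atTop atTop :=
    tendsto_atTop_mono (fun k => ht.le_apply.trans (hpos k).1.le) tendsto_id
  exact ENat.limsup_eq_top_of_natCast_lt_comp hpos_tendsto hb hcost

/-- if a play `ρ` visits a designated restart vertex `⊤`
infinitely often (at the strictly increasing positions `t 0 < t 1 < ⋯`), and
between any two consecutive visits to `⊤` there is a position whose
cost-of-response exceeds the `k`-th counter value `b k`, where the counter
values strictly increase, then `limsup_{j→∞} Cor(ρ, j) = ∞`, i.e., `ρ` violates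
the parity condition with weights. -/
theorem restarts_force_unbounded_cost (Ω : V → ℕ) (w : V → V → ℤ) (ρ : ℕ → V)
    (vT : V) (t : ℕ → ℕ) (ht : StrictMono t) (hvT : ∀ k, ρ (t k) = vT)
    (b : ℕ → ℕ) (hb : StrictMono b) (pos : ℕ → ℕ)
    (hpos : ∀ k, t k < pos k ∧ pos k < t (k + 1))
    (hcost : ∀ k, (b k : ℕ∞) < Cor Ω w ρ (pos k)) :
    Filter.atTop.limsup (fun j => Cor Ω w ρ j) = ⊤ :=
  restarts_force_unbounded_cost_general Ω w ρ t ht b hb pos hpos hcost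
end
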